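/- arXiv:2406.04297 — 2 statements merged into one kernel-verified Lean document; each statement's English description precedes it below -/
import Mathlib

section
/- Let B be a complex C*-algebra, σ a *-automorphism of B, and D ⊆ B a norm-closed *-subalgebra satisfying D·σ(D) = σ(D). Then for all integers k₁ ≤ k₂ ≤ ℓ, D_{k₂,ℓ} is a closed two-sided ideal of the C*-algebra D_{k₁,ℓ}, and for every ℓ ∈ ℤ, D_{ℓ,∞} is a closed two-sided ideal of the C*-algebra D_σ. -/
noncomputable section

variable {B : Type*} [NonUnitalCStarAlgebra B]

noncomputable instance : Group (B ≃⋆ₐ[ℂ] B) where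
  mul f g := g.trans f
  one := StarAlgEquiv.refl ℂ B
  inv := StarAlgEquiv.symm
  mul_assoc f g h := rfl
  one_mul f := rfl
  mul_one f := rfl
  inv_mul_cancel f := by ext x; exact f.symm_apply_apply x

/-- The norm-closed linear span of `{x * y : x ∈ X, y ∈ Y}`. -/
def mulSpan (X Y : Set B) : Set B :=
  closure ↑(Submodule.span ℂ {z : B | ∃ x ∈ X, ∃ y ∈ Y, z = x * y})

/-- `D_{k,ℓ}`: sums `x_{k-1} + ⋯ + x_{ℓ-1}` with `x_j ∈ σ^j(D)`. -/
def Dfin (σ : B ≃⋆ₐ[ℂ] B) (D : Set B) (k ℓ : ℤ) : Set B :=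
  {x | ∃ f : ℤ → B, (∀ j ∈ Finset.Icc (k-1) (ℓ-1), f j ∈ ⇑(σ ^ j) '' D) ∧
      x = ∑ j ∈ Finset.Icc (k-1) (ℓ-1), f j}

/-- `D_{k,∞}`. -/
def DInfR (σ : B ≃⋆ₐ[ℂ] B) (D : Set B) (k : ℤ) : Set B :=
  closure (⋃ n : ℕ, Dfin σ D k (k + n))

/-- `D_{-∞,k}`. -/
def DInfL (σ : B ≃⋆ₐ[ℂ] B) (D : Set B) (k : ℤ) : Set B :=
  closure (⋃ n : ℕ, Dfin σ D (k - n) k)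

/-- `D_σ`. -/
def Dsig (σ : B ≃⋆ₐ[ℂ] B) (D : Set B) : Set B :=
  closure (⋃ n : ℕ, Dfin σ D (-(n:ℤ)) n)

/-- Norm-closed *-subalgebra, as a predicate on subsets. -/
def IsCStarSubset (S : Set B) : Prop :=
  IsClosed S ∧ (0:B) ∈ S ∧ (∀ x ∈ S, ∀ y ∈ S, x + y ∈ S) ∧
    (∀ (c : ℂ), ∀ x ∈ S, c • x ∈ S) ∧ (∀ x ∈ S, ∀ y ∈ S, x * y ∈ S) ∧
    (∀ x ∈ S, star x ∈ S)

/-- Harnisch–Kirchberg system. -/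
def IsHKSystem (σ : B ≃⋆ₐ[ℂ] B) (D : Set B) : Prop :=
  IsCStarSubset D ∧
  mulSpan D (⇑σ '' D) = ⇑σ '' D ∧
  D ∩ ⇑σ '' D = {0} ∧
  (∀ d ∈ D, (∀ e ∈ D, d * σ e = 0 ∧ σ e * d = 0) → d = 0)

/-- Closed two-sided ideal `I` of a C*-subalgebra `C` (both given as subsets). -/
def IsClosedIdealIn (C I : Set B) : Prop :=
  I ⊆ C ∧ IsClosed I ∧ (0:B) ∈ I ∧ (∀ x ∈ I, ∀ y ∈ I, x + y ∈ I) ∧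
    (∀ (c : ℂ), ∀ x ∈ I, c • x ∈ I) ∧ (∀ c ∈ C, ∀ j ∈ I, c * j ∈ I ∧ j * c ∈ I)

/-- Essential closed two-sided ideal. -/
def IsEssentialIdealIn (C I : Set B) : Prop :=
  IsClosedIdealIn C I ∧ ∀ x ∈ C, (∀ j ∈ I, x * j = 0 ∧ j * x = 0) → x = 0

/-!
Since `σ` is an automorphism, `D ⬝ σ(D) = σ(D)` propagates to `σⁱ(D) ⬝ σʲ(D) ⊆ σʲ(D)` for
`i ≤ j` (induction on `j - i`, passing through the closed linear span). Multiplying out the sums,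
`D_{k,ℓ}` is a *-subalgebra in which `D_{k',ℓ}` is an ideal for `k ≤ k'`, and this survives taking
closures of the increasing unions defining `D_{ℓ,∞}` and `D_σ`.

The analytic point is that `D_{k,ℓ} = σ^{k-1}(D) + D_{k+1,ℓ}` is closed. In a C*-algebra, if `A`
and `J` are closed *-subalgebras with `AJ + JA ⊆ J`, then `A + J` is closed: an element of `A`
within `δ` of `J` is within `4δ` of `A ∩ J`, and a geometric series then corrects any limit of
elements of `A + J`. For self-adjoint `a`, the nearby element is `a` soft-thresholded at `2δ`; it
lies in `J` because it factors as `a^(m+1) g(a)` with `‖g(a)‖ ≤ (2δ)⁻ᵐ`, while `a^(m+1)` lies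
within `δ^(m+1)` of `J`.
-/

open scoped Pointwise ComplexStarModule

theorem isClosed_add_of_exists_near {E S : Type*} [NormedAddCommGroup E] [CompleteSpace E]
    [SetLike S E] [AddSubgroupClass S E] {A J : S} (hA : IsClosed (A : Set E))
    (hJ : IsClosed (J : Set E)) (K : ℝ)
    (hnear : ∀ a ∈ A, ∀ j ∈ J, ∀ δ, ‖a - j‖ < δ → ∃ c, (c ∈ A ∧ c ∈ J) ∧ ‖a - c‖ ≤ K * δ) :
    IsClosed ((A : Set E) + (J : Set E)) := by
  refine isClosed_of_closure_subset fun x hx => ?_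
  have happrox : ∀ n : ℕ, ∃ a ∈ A, ∃ b ∈ J, ‖x - (a + b)‖ < (2⁻¹ : ℝ) ^ n := fun n => by
    obtain ⟨_, ⟨a, ha, b, hb, rfl⟩, hab⟩ :=
      Metric.mem_closure_iff.mp hx ((2⁻¹ : ℝ) ^ n) (by positivity)
    exact ⟨a, ha, b, hb, by rwa [← dist_eq_norm]⟩
  choose α hα β hβ hαβ using happrox
  -- `α (n+1) - α n` lies within `3 ⬝ 2⁻ⁿ` of `J`, so it can be corrected by an element of `A ∩ J`
  have hstep : ∀ n, ∃ c, (c ∈ A ∧ c ∈ J) ∧ ‖α (n + 1) - α n - c‖ ≤ K * 3 * (2⁻¹ : ℝ) ^ n := by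
    intro n
    rw [mul_assoc]
    refine hnear _ (sub_mem (hα _) (hα n)) _ (neg_mem (sub_mem (hβ (n + 1)) (hβ n))) _ ?_
    calc ‖α (n + 1) - α n - -(β (n + 1) - β n)‖
        = ‖(x - (α n + β n)) - (x - (α (n + 1) + β (n + 1)))‖ := by congr 1; abel
      _ ≤ ‖x - (α n + β n)‖ + ‖x - (α (n + 1) + β (n + 1))‖ := norm_sub_le _ _
      _ < (2⁻¹ : ℝ) ^ n + (2⁻¹ : ℝ) ^ (n + 1) := add_lt_add (hαβ n) (hαβ (n + 1))
      _ ≤ 3 * (2⁻¹ : ℝ) ^ n := by rw [pow_succ]; linarith [pow_pos (by norm_num : (0 : ℝ) < 2⁻¹) n]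
  choose c hc hcnear using hstep
  obtain ⟨γ, hγ⟩ : ∃ γ : ℕ → E, ∀ n, γ n = α n - ∑ k ∈ Finset.range n, c k := ⟨_, fun _ => rfl⟩
  have hγA : ∀ n, γ n ∈ A := fun n => hγ n ▸ sub_mem (hα n) (sum_mem fun k _ => (hc k).1)
  have hγJ : ∀ n, (α n + β n) - γ n ∈ J := fun n => by
    rw [hγ, add_sub_sub_cancel]
    exact add_mem (hβ n) (sum_mem fun k _ => (hc k).2)
  obtain ⟨p, hp⟩ := cauchySeq_tendsto_of_complete <| cauchySeq_of_le_geometric (f := γ) _ (K * 3)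
    (by norm_num : (2⁻¹ : ℝ) < 1) fun n => by
      have hdiff : γ (n + 1) - γ n = α (n + 1) - α n - c n := by
        rw [hγ, hγ, Finset.sum_range_succ]; abel
      rw [dist_comm, dist_eq_norm, hdiff]
      exact hcnear n
  have hu : Filter.Tendsto (fun n => α n + β n) Filter.atTop (nhds x) := by
    rw [tendsto_iff_norm_sub_tendsto_zero]
    refine squeeze_zero (fun n => norm_nonneg _) (fun n => ?_)
      (tendsto_pow_atTop_nhds_zero_of_lt_one (by norm_num) (by norm_num : (2⁻¹ : ℝ) < 1))
    rw [norm_sub_rev]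
    exact (hαβ n).le
  exact ⟨p, hA.mem_of_tendsto hp (.of_forall hγA), x - p,
    hJ.mem_of_tendsto (hu.sub hp) (.of_forall hγJ), add_sub_cancel p x⟩

lemma mulSpan_subset {X Y : Set B} {S : Submodule ℂ B} (hS : IsClosed (S : Set B))
    (h : ∀ x ∈ X, ∀ y ∈ Y, x * y ∈ S) : mulSpan X Y ⊆ S :=
  closure_minimal (Submodule.span_le.mpr <| by rintro _ ⟨x, hx, y, hy, rfl⟩; exact h x hx y hy) hS

lemma isClosedIdealIn_closure {C : Set B} {I : Submodule ℂ B} (hIC : (I : Set B) ⊆ C)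
    (hmul : ∀ c ∈ C, ∀ j ∈ I, c * j ∈ I ∧ j * c ∈ I) :
    IsClosedIdealIn (closure C) (closure I) := by
  have hcl : closure (I : Set B) = I.topologicalClosure := I.topologicalClosure_coe.symm
  refine ⟨closure_mono hIC, isClosed_closure, subset_closure I.zero_mem, ?_, ?_,
    fun c hc j hj => ⟨?_, ?_⟩⟩
  · rw [hcl]; exact fun x hx y hy => add_mem hx hy
  · rw [hcl]; exact fun c x hx => Submodule.smul_mem _ c hx
  · exact map_mem_closure₂ continuous_mul hc hj fun c hc j hj => (hmul c hc j hj).1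
  · exact map_mem_closure₂ continuous_mul hj hc fun j hj c hc => (hmul c hc j hj).2

def softThreshold (r t : ℝ) : ℝ := t - max (-r) (min t r)

lemma continuous_softThreshold (r : ℝ) : Continuous (softThreshold r) := by
  unfold softThreshold; fun_prop

lemma softThreshold_eq_zero {r t : ℝ} (h : |t| ≤ r) : softThreshold r t = 0 := by
  rw [abs_le] at h
  rw [softThreshold, min_eq_left h.2, max_eq_right h.1, sub_self]

lemma softThreshold_zero {r : ℝ} (hr : 0 ≤ r) : softThreshold r 0 = 0 :=
  softThreshold_eq_zero (by rwa [abs_zero])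

lemma abs_softThreshold_le {r : ℝ} (hr : 0 ≤ r) (t : ℝ) : |softThreshold r t| ≤ |t| := by
  unfold softThreshold
  rcases abs_cases t with ⟨h, _⟩ | ⟨h, _⟩ <;> rw [h, abs_le] <;>
    constructor <;> simp only [max_def, min_def] <;> split_ifs <;> linarith

lemma abs_sub_softThreshold_le {r : ℝ} (hr : 0 ≤ r) (t : ℝ) : |t - softThreshold r t| ≤ r := by
  rw [softThreshold, sub_sub_cancel, abs_le]
  exact ⟨le_max_left _ _, max_le (by linarith) (min_le_right _ _)⟩

lemma continuous_softThreshold_div_pow {r : ℝ} (hr : 0 < r) (n : ℕ) :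
    Continuous fun t => softThreshold r t / t ^ n := by
  rw [continuous_iff_continuousAt]
  intro t₀
  rcases eq_or_ne t₀ 0 with rfl | ht₀
  · -- the quotient vanishes on a neighbourhood of `0`
    refine (continuousAt_congr (g := fun _ => (0 : ℝ)) ?_).mpr continuousAt_const
    filter_upwards [Metric.ball_mem_nhds (0 : ℝ) hr] with t ht
    rw [Metric.mem_ball, Real.dist_eq, sub_zero] at ht
    rw [softThreshold_eq_zero ht.le, zero_div]
  · exact (continuous_softThreshold r).continuousAt.div (continuous_pow n).continuousAt
      (pow_ne_zero _ ht₀)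

lemma abs_softThreshold_div_pow_le {r : ℝ} (hr : 0 < r) (m : ℕ) (t : ℝ) :
    |softThreshold r t / t ^ (m + 1)| ≤ (r ^ m)⁻¹ := by
  rcases le_or_gt |t| r with h | h
  · rw [softThreshold_eq_zero h, zero_div, abs_zero]
    positivity
  · have ht : 0 < |t| := hr.trans h
    calc |softThreshold r t / t ^ (m + 1)| ≤ |t| / |t| ^ (m + 1) := by
          rw [abs_div, abs_pow]
          exact div_le_div_of_nonneg_right (abs_softThreshold_le hr.le t) (by positivity)
      _ = (|t| ^ m)⁻¹ := by field_simp; ring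
      _ ≤ (r ^ m)⁻¹ := by gcongr

lemma realPart_mem {A : NonUnitalStarSubalgebra ℂ B} {a : B} (ha : a ∈ A) : (ℜ a : B) ∈ A := by
  rw [realPart_apply_coe, ← Complex.coe_smul]
  exact SMulMemClass.smul_mem _ (add_mem ha (star_mem ha))

lemma imaginaryPart_mem {A : NonUnitalStarSubalgebra ℂ B} {a : B} (ha : a ∈ A) :
    (ℑ a : B) ∈ A := by
  rw [imaginaryPart_apply_coe, ← Complex.coe_smul]
  exact SMulMemClass.smul_mem _ (SMulMemClass.smul_mem _ (sub_mem ha (star_mem ha)))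

section Approximation

variable {A J : NonUnitalStarSubalgebra ℂ B} [IsClosed (A : Set B)]

lemma exists_near_cfcₙ_pow (hAJ : ∀ a ∈ A, ∀ j ∈ J, a * j ∈ J ∧ j * a ∈ J)
    {a j : B} (ha : a ∈ A) (hsa : IsSelfAdjoint a) (hj : j ∈ J) {δ : ℝ} (hja : ‖a - j‖ ≤ δ)
    (m : ℕ) : ∃ j' ∈ J, ‖cfcₙ (fun t : ℝ => t ^ (m + 1)) a - j'‖ ≤ δ ^ (m + 1) := by
  induction m with
  | zero => exact ⟨j, hj, by simpa [cfcₙ_id' ℝ a] using hja⟩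
  | succ m ih =>
    obtain ⟨j', hj', hnorm⟩ := ih
    set p := cfcₙ (fun t : ℝ => t ^ (m + 1)) a
    have hp : p ∈ A := cfcₙ_mem _ ha
    have hpow : cfcₙ (fun t : ℝ => t ^ (m + 1 + 1)) a = a * p := by
      simp_rw [pow_succ' _ (m + 1)]
      rw [cfcₙ_mul (fun t : ℝ => t) _ a, cfcₙ_id' ℝ a]
    -- `a ⬝ p - (a j' + j p - j j') = (a - j)(p - j')`
    refine ⟨a * j' + j * p - j * j',
      sub_mem (add_mem (hAJ a ha j' hj').1 (hAJ p hp j hj).2) (mul_mem hj hj'), ?_⟩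
    calc ‖cfcₙ (fun t : ℝ => t ^ (m + 1 + 1)) a - (a * j' + j * p - j * j')‖
        = ‖(a - j) * (p - j')‖ := by rw [hpow]; congr 1; noncomm_ring
      _ ≤ ‖a - j‖ * ‖p - j'‖ := norm_mul_le _ _
      _ ≤ δ * δ ^ (m + 1) := by gcongr; exact (norm_nonneg _).trans hja
      _ = δ ^ (m + 1 + 1) := by ring

variable [IsClosed (J : Set B)]

lemma cfcₙ_softThreshold_mem (hAJ : ∀ a ∈ A, ∀ j ∈ J, a * j ∈ J ∧ j * a ∈ J)
    {a j : B} (ha : a ∈ A) (hsa : IsSelfAdjoint a) (hj : j ∈ J) {δ : ℝ} (hδ : 0 < δ)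
    (hja : ‖a - j‖ ≤ δ) : cfcₙ (softThreshold (2 * δ)) a ∈ J := by
  rw [← SetLike.mem_coe, ← IsClosed.closure_eq ‹IsClosed (J : Set B)›, Metric.mem_closure_iff]
  intro ε hε
  obtain ⟨m, hm⟩ := exists_pow_lt_of_lt_one (div_pos hε hδ) (by norm_num : (2⁻¹ : ℝ) < 1)
  -- factor the threshold function as `t ^ (m + 1) * g t` with `‖g‖ ≤ (2δ)⁻ᵐ`
  set g := fun t => softThreshold (2 * δ) t / t ^ (m + 1)
  have hg : Continuous g := continuous_softThreshold_div_pow (by positivity) (m + 1)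
  have h0 : softThreshold (2 * δ) 0 = 0 := softThreshold_zero (by positivity)
  have hfactor :
      cfcₙ (softThreshold (2 * δ)) a = cfcₙ (fun t : ℝ => t ^ (m + 1)) a * cfcₙ g a := by
    rw [← cfcₙ_mul _ g a (by fun_prop) (by simp) hg.continuousOn (by simp [g, h0])]
    congr 1; ext t
    rcases eq_or_ne t 0 with rfl | ht
    · simp [h0]
    · simp only [g]; field_simp
  obtain ⟨j', hj', hnorm⟩ := exists_near_cfcₙ_pow hAJ ha hsa hj hja m
  refine ⟨j' * cfcₙ g a, (hAJ _ (cfcₙ_mem _ ha) j' hj').2, ?_⟩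
  calc dist (cfcₙ (softThreshold (2 * δ)) a) (j' * cfcₙ g a)
      = ‖(cfcₙ (fun t : ℝ => t ^ (m + 1)) a - j') * cfcₙ g a‖ := by
        rw [dist_eq_norm, hfactor, sub_mul]
    _ ≤ δ ^ (m + 1) * ((2 * δ) ^ m)⁻¹ := by
        refine (norm_mul_le _ _).trans (mul_le_mul hnorm ?_ (norm_nonneg _) (by positivity))
        exact norm_cfcₙ_le fun t _ => abs_softThreshold_div_pow_le (by positivity) m t
    _ = 2⁻¹ ^ m * δ := by rw [mul_pow, pow_succ, inv_pow]; field_simp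
    _ < ε := (lt_div_iff₀ hδ).mp hm

lemma exists_mem_inf_near_of_isSelfAdjoint (hAJ : ∀ a ∈ A, ∀ j ∈ J, a * j ∈ J ∧ j * a ∈ J)
    {a j : B} (ha : a ∈ A) (hsa : IsSelfAdjoint a) (hj : j ∈ J) {δ : ℝ} (hja : ‖a - j‖ < δ) :
    ∃ b, (b ∈ A ∧ b ∈ J) ∧ ‖a - b‖ ≤ 2 * δ := by
  have hδ : 0 < δ := (norm_nonneg _).trans_lt hja
  refine ⟨_, ⟨cfcₙ_mem _ ha, cfcₙ_softThreshold_mem hAJ ha hsa hj hδ hja.le⟩, ?_⟩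
  have hcont := (continuous_softThreshold (2 * δ)).continuousOn (s := quasispectrum ℝ a)
  have hsub := cfcₙ_sub (fun t : ℝ => t) _ a (by fun_prop) (by simp) hcont
    (softThreshold_zero (by positivity))
  rw [cfcₙ_id' ℝ a] at hsub
  rw [← hsub]
  exact norm_cfcₙ_le fun t _ => abs_sub_softThreshold_le (by positivity) t

lemma exists_mem_inf_near (hAJ : ∀ a ∈ A, ∀ j ∈ J, a * j ∈ J ∧ j * a ∈ J) {a j : B}
    (ha : a ∈ A) (hj : j ∈ J) {δ : ℝ} (hja : ‖a - j‖ < δ) :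
    ∃ b, (b ∈ A ∧ b ∈ J) ∧ ‖a - b‖ ≤ 4 * δ := by
  have hre : ‖(ℜ a : B) - ℜ j‖ < δ :=
    calc ‖(ℜ a : B) - ℜ j‖ = ‖ℜ (a - j)‖ := by rw [map_sub]; rfl
      _ ≤ ‖a - j‖ := realPart.norm_le _
      _ < δ := hja
  have him : ‖(ℑ a : B) - ℑ j‖ < δ :=
    calc ‖(ℑ a : B) - ℑ j‖ = ‖ℑ (a - j)‖ := by rw [map_sub]; rfl
      _ ≤ ‖a - j‖ := imaginaryPart.norm_le _
      _ < δ := hja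
  obtain ⟨x, ⟨hxA, hxJ⟩, hx⟩ :=
    exists_mem_inf_near_of_isSelfAdjoint hAJ (realPart_mem ha) (ℜ a).2 (realPart_mem hj) hre
  obtain ⟨y, ⟨hyA, hyJ⟩, hy⟩ :=
    exists_mem_inf_near_of_isSelfAdjoint hAJ (imaginaryPart_mem ha) (ℑ a).2
      (imaginaryPart_mem hj) him
  refine ⟨x + Complex.I • y, ⟨add_mem hxA (SMulMemClass.smul_mem _ hyA),
    add_mem hxJ (SMulMemClass.smul_mem _ hyJ)⟩, ?_⟩
  calc ‖a - (x + Complex.I • y)‖ = ‖((ℜ a : B) - x) + Complex.I • ((ℑ a : B) - y)‖ := by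
        conv_lhs => rw [← realPart_add_I_smul_imaginaryPart a]
        congr 1; module
    _ ≤ ‖(ℜ a : B) - x‖ + ‖(ℑ a : B) - y‖ := by
        refine (norm_add_le _ _).trans_eq ?_
        rw [norm_smul, Complex.norm_I, one_mul]
    _ ≤ 2 * δ + 2 * δ := add_le_add hx hy
    _ = 4 * δ := by ring

theorem isClosed_add_of_mul_mem (hAJ : ∀ a ∈ A, ∀ j ∈ J, a * j ∈ J ∧ j * a ∈ J) :
    IsClosed ((A : Set B) + (J : Set B)) :=
  isClosed_add_of_exists_near ‹_› ‹_› 4 fun _ ha _ hj _ hja => exists_mem_inf_near hAJ ha hj hja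

end Approximation

section HarnischKirchberg

variable (σ : B ≃⋆ₐ[ℂ] B) (D : NonUnitalStarSubalgebra ℂ B)

def shift (j : ℤ) : NonUnitalStarSubalgebra ℂ B := D.map (σ ^ j).toNonUnitalStarAlgHom

def dfin (k ℓ : ℤ) : Submodule ℂ B :=
  ⨆ j ∈ Finset.Icc (k - 1) (ℓ - 1), (shift σ D j).toNonUnitalSubalgebra.toSubmodule

variable {σ D}

lemma zpow_add_one_apply (m : ℤ) (x : B) : (σ ^ (m + 1)) x = (σ ^ m) (σ x) := by
  rw [zpow_add_one]; rfl

lemma isClosed_shift (hD : IsClosed (D : Set B)) (j : ℤ) : IsClosed (shift σ D j : Set B) :=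
  (StarAlgEquiv.isometry (σ ^ j)).isClosedEmbedding.isClosedMap _ hD

lemma mul_mem_shift_add (hD : IsClosed (D : Set B))
    (hmod : mulSpan (D : Set B) (⇑σ '' (D : Set B)) = ⇑σ '' (D : Set B)) (i : ℤ) (n : ℕ)
    {a b : B} (ha : a ∈ shift σ D i) (hb : b ∈ shift σ D (i + n)) :
    a * b ∈ shift σ D (i + n) := by
  induction n generalizing b with
  | zero => simpa using mul_mem ha (by simpa using hb)
  | succ n ih =>
    set m := i + n
    rw [show i + ↑(n + 1) = m + 1 by push_cast; ring] at hb ⊢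
    obtain ⟨e, he, rfl⟩ := hb
    -- `σ e ∈ D ⬝ σ(D)` and, by induction, `a ⬝ σ^m(D) ⊆ σ^m(D)`
    let f : B →ₗ[ℂ] B := LinearMap.mulLeft ℂ a ∘ₗ ((σ ^ m : B ≃⋆ₐ[ℂ] B) : B →ₗ[ℂ] B)
    have hf : Continuous f :=
      (continuous_const_mul a).comp (StarAlgEquiv.isometry (σ ^ m)).continuous
    have hprod : ∀ x ∈ (D : Set B), ∀ y ∈ ⇑σ '' (D : Set B),
        f (x * y) ∈ (shift σ D (m + 1)).toNonUnitalSubalgebra.toSubmodule := by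
      rintro x hx _ ⟨y, hy, rfl⟩
      obtain ⟨x', hx', hx'eq⟩ := ih (b := (σ ^ m) x) ⟨x, hx, rfl⟩
      obtain ⟨z, hz, hzeq⟩ : x' * σ y ∈ ⇑σ '' (D : Set B) :=
        hmod ▸ subset_closure (Submodule.subset_span ⟨x', hx', σ y, ⟨y, hy, rfl⟩, rfl⟩)
      refine ⟨z, hz, ?_⟩
      change (σ ^ (m + 1)) z = a * (σ ^ m) (x * σ y)
      rw [zpow_add_one_apply, hzeq, map_mul, map_mul, ← mul_assoc]
      exact congrArg (· * _) hx'eq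
    have hσe : σ e ∈ mulSpan (D : Set B) (⇑σ '' (D : Set B)) := by rw [hmod]; exact ⟨e, he, rfl⟩
    have hS : IsClosed
        (Submodule.comap f (shift σ D (m + 1)).toNonUnitalSubalgebra.toSubmodule : Set B) :=
      (isClosed_shift hD _).preimage hf
    have := mulSpan_subset hS hprod hσe
    change a * (σ ^ (m + 1)) e ∈ _
    rwa [zpow_add_one_apply]

lemma mul_mem_shift (hD : IsClosed (D : Set B))
    (hmod : mulSpan (D : Set B) (⇑σ '' (D : Set B)) = ⇑σ '' (D : Set B)) {i j : ℤ} {a b : B}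
    (ha : a ∈ shift σ D i) (hb : b ∈ shift σ D j) : a * b ∈ shift σ D (max i j) := by
  rcases le_total i j with h | h
  · obtain ⟨n, rfl⟩ : ∃ n : ℕ, j = i + n := ⟨(j - i).toNat, by omega⟩
    rw [max_eq_right h]
    exact mul_mem_shift_add hD hmod i n ha hb
  · obtain ⟨n, rfl⟩ : ∃ n : ℕ, i = j + n := ⟨(i - j).toNat, by omega⟩
    rw [max_eq_left h]
    simpa using star_mem (mul_mem_shift_add hD hmod j n (star_mem hb) (star_mem ha))

lemma coe_dfin (k ℓ : ℤ) : (dfin σ D k ℓ : Set B) = Dfin σ (D : Set B) k ℓ := by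
  classical
  ext x
  simp only [SetLike.mem_coe, dfin, Submodule.mem_iSup_finset_iff_exists_sum]
  constructor
  · rintro ⟨μ, rfl⟩
    exact ⟨fun j => μ j, fun j _ => (μ j).2, rfl⟩
  · rintro ⟨f, hf, rfl⟩
    refine ⟨fun j => if h : j ∈ Finset.Icc (k - 1) (ℓ - 1) then ⟨f j, hf j h⟩ else 0,
      Finset.sum_congr rfl fun j hj => ?_⟩
    simp [hj]

lemma dfin_mono {k k' ℓ ℓ' : ℤ} (hk : k ≤ k') (hℓ : ℓ' ≤ ℓ) : dfin σ D k' ℓ' ≤ dfin σ D k ℓ :=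
  biSup_mono fun _ hj => Finset.Icc_subset_Icc (by omega) (by omega) hj

lemma mem_dfin_of_mem_shift {k ℓ j : ℤ} (hj : j ∈ Finset.Icc (k - 1) (ℓ - 1)) {x : B}
    (hx : x ∈ shift σ D j) : x ∈ dfin σ D k ℓ :=
  (le_biSup (fun j => (shift σ D j).toNonUnitalSubalgebra.toSubmodule) hj : _) hx

lemma dfin_self (k : ℤ) : dfin σ D k k = (shift σ D (k - 1)).toNonUnitalSubalgebra.toSubmodule := by
  rw [dfin, Finset.Icc_self, Finset.iSup_singleton]

lemma dfin_eq_sup {k ℓ : ℤ} (h : k < ℓ) :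
    dfin σ D k ℓ = (shift σ D (k - 1)).toNonUnitalSubalgebra.toSubmodule ⊔ dfin σ D (k + 1) ℓ := by
  classical
  have hIcc : Finset.Icc (k - 1) (ℓ - 1) = insert (k - 1) (Finset.Icc k (ℓ - 1)) := by
    ext j; simp only [Finset.mem_insert, Finset.mem_Icc]; omega
  rw [dfin, dfin, add_sub_cancel_right, hIcc, Finset.iSup_insert]

lemma star_mem_dfin {k ℓ : ℤ} {x : B} (hx : x ∈ dfin σ D k ℓ) : star x ∈ dfin σ D k ℓ := by
  rw [← SetLike.mem_coe, coe_dfin] at hx ⊢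
  obtain ⟨f, hf, rfl⟩ := hx
  refine ⟨fun j => star (f j), fun j hj => ?_, star_sum _ _⟩
  exact (star_mem (hf j hj : f j ∈ shift σ D j) : star (f j) ∈ shift σ D j)

lemma mul_mem_dfin (hD : IsClosed (D : Set B))
    (hmod : mulSpan (D : Set B) (⇑σ '' (D : Set B)) = ⇑σ '' (D : Set B))
    {k₁ ℓ₁ k₂ ℓ₂ k ℓ : ℤ} (hk : k ≤ max k₁ k₂) (hℓ : max ℓ₁ ℓ₂ ≤ ℓ) {x y : B}
    (hx : x ∈ dfin σ D k₁ ℓ₁) (hy : y ∈ dfin σ D k₂ ℓ₂) : x * y ∈ dfin σ D k ℓ := by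
  rw [← SetLike.mem_coe, coe_dfin] at hx hy
  obtain ⟨f, hf, rfl⟩ := hx
  obtain ⟨g, hg, rfl⟩ := hy
  rw [Finset.sum_mul_sum]
  refine sum_mem fun i hi => sum_mem fun j hj => ?_
  refine mem_dfin_of_mem_shift ?_ (mul_mem_shift hD hmod (hf i hi) (hg j hj))
  simp only [Finset.mem_Icc] at hi hj ⊢
  omega

def dfinSubalgebra (hD : IsClosed (D : Set B))
    (hmod : mulSpan (D : Set B) (⇑σ '' (D : Set B)) = ⇑σ '' (D : Set B)) (k ℓ : ℤ) :
    NonUnitalStarSubalgebra ℂ B :=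
  { dfin σ D k ℓ with
    mul_mem' := mul_mem_dfin hD hmod (max_self k).ge (max_self ℓ).le
    star_mem' := star_mem_dfin }

lemma isClosed_dfin (hD : IsClosed (D : Set B))
    (hmod : mulSpan (D : Set B) (⇑σ '' (D : Set B)) = ⇑σ '' (D : Set B)) {k ℓ : ℤ} (h : k ≤ ℓ) :
    IsClosed (dfin σ D k ℓ : Set B) := by
  induction k, h using Int.leInductionDown with
  | base => rw [dfin_self]; exact isClosed_shift hD _
  | pred k hk ih =>
    have : IsClosed (shift σ D (k - 1 - 1) : Set B) := isClosed_shift hD _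
    have : IsClosed (dfinSubalgebra hD hmod k ℓ : Set B) := ih
    rw [dfin_eq_sup (by omega), Submodule.coe_sup, sub_add_cancel]
    refine isClosed_add_of_mul_mem (J := dfinSubalgebra hD hmod k ℓ) fun a ha j hj => ?_
    have ha' : a ∈ dfin σ D (k - 1) (k - 1) := mem_dfin_of_mem_shift (by simp) ha
    exact ⟨mul_mem_dfin hD hmod (by omega) (by omega) ha' hj,
      mul_mem_dfin hD hmod (by omega) (by omega) hj ha'⟩

end HarnischKirchberg

/-- if `D·σ(D) = σ(D)` then `D_{k₂,ℓ}` is a closed two-sided ideal of `D_{k₁,ℓ}`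
for `k₁ ≤ k₂ ≤ ℓ`, and `D_{ℓ,∞}` is a closed two-sided ideal of `D_σ`. -/
theorem stmt_5 (σ : B ≃⋆ₐ[ℂ] B) (D : NonUnitalStarSubalgebra ℂ B)
    (hD : IsClosed (D : Set B))
    (hmod : mulSpan (D : Set B) (⇑σ '' (D : Set B)) = ⇑σ '' (D : Set B)) :
    (∀ k₁ k₂ ℓ : ℤ, k₁ ≤ k₂ → k₂ ≤ ℓ →
      IsClosedIdealIn (Dfin σ (D : Set B) k₁ ℓ) (Dfin σ (D : Set B) k₂ ℓ)) ∧
    (∀ ℓ : ℤ, IsClosedIdealIn (Dsig σ (D : Set B)) (DInfR σ (D : Set B) ℓ)) := by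
  refine ⟨fun k₁ k₂ ℓ h₁₂ h₂ℓ => ?_, fun ℓ => ?_⟩
  · rw [← coe_dfin, ← coe_dfin, ← (isClosed_dfin hD hmod (h₁₂.trans h₂ℓ)).closure_eq,
      ← (isClosed_dfin hD hmod h₂ℓ).closure_eq]
    exact isClosedIdealIn_closure (dfin_mono h₁₂ le_rfl) fun c hc j hj =>
      ⟨mul_mem_dfin hD hmod (by omega) (by omega) hc hj,
        mul_mem_dfin hD hmod (by omega) (by omega) hj hc⟩
  · have hdir : Directed (· ≤ ·) fun n : ℕ => dfin σ D ℓ (ℓ + n) :=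
      Monotone.directed_le fun m n h => dfin_mono le_rfl (by omega)
    simp only [DInfR, Dsig, ← coe_dfin]
    rw [← Submodule.coe_iSup_of_directed _ hdir]
    refine isClosedIdealIn_closure (fun x hx => ?_) fun c hc j hj => ?_
    · obtain ⟨n, hn⟩ := (Submodule.mem_iSup_of_directed _ hdir).mp hx
      exact Set.mem_iUnion.mpr ⟨ℓ.natAbs + n, dfin_mono (by omega) (by omega) hn⟩
    · obtain ⟨m, hm⟩ := Set.mem_iUnion.mp hc
      obtain ⟨n, hn⟩ := (Submodule.mem_iSup_of_directed _ hdir).mp hj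
      let N := (max (m : ℤ) (ℓ + n) - ℓ).toNat
      exact ⟨Submodule.mem_iSup_of_mem N (mul_mem_dfin hD hmod (by omega) (by omega) hm hn),
        Submodule.mem_iSup_of_mem N (mul_mem_dfin hD hmod (by omega) (by omega) hn hm)⟩

end
end

section
/- Let (B, σ, D) be a Harnisch–Kirchberg system and let I be a closed two-sided ideal of the C*-algebra D_σ with σ(I) = I. Then I ∩ D is a semi-invariant closed two-sided ideal of D; that is, I ∩ D is a closed two-sided ideal of D and j·σ(e) ∈ σ(I ∩ D) for all j ∈ I ∩ D and e ∈ D. -/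
noncomputable section

variable {B : Type*} [NonUnitalCStarAlgebra B]

/- Proof idea: for `j ∈ I ∩ D` and `e ∈ D`, condition (i) puts `j σ(e)` in `D·σ(D) = σ(D)`, say
`j σ(e) = σ(x)` with `x ∈ D`. Since `σ(e) ∈ D_σ`, also `σ(x) = j σ(e) ∈ I = σ(I)`, so `x ∈ I ∩ D`. -/

lemma zpow_apply_mem_Dsig {σ : B ≃⋆ₐ[ℂ] B} {D : Set B} (hD0 : (0 : B) ∈ D) (j : ℤ) {x : B}
    (hx : x ∈ D) : (σ ^ j) x ∈ Dsig σ D := by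
  refine subset_closure (Set.mem_iUnion.2 ⟨j.natAbs + 1, Pi.single j ((σ ^ j) x), ?_, ?_⟩)
  · intro i _
    by_cases hij : i = j
    · subst hij
      exact ⟨x, hx, by simp⟩
    · exact ⟨0, hD0, by simp [hij]⟩
  · rw [Finset.sum_pi_single', if_pos (Finset.mem_Icc.2 (by omega))]

lemma mem_Dsig_of_mem {σ : B ≃⋆ₐ[ℂ] B} {D : Set B} (hD0 : (0 : B) ∈ D) {x : B} (hx : x ∈ D) :
    x ∈ Dsig σ D := by
  simpa using zpow_apply_mem_Dsig (σ := σ) hD0 0 hx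

lemma apply_mem_Dsig {σ : B ≃⋆ₐ[ℂ] B} {D : Set B} (hD0 : (0 : B) ∈ D) {x : B} (hx : x ∈ D) :
    σ x ∈ Dsig σ D := by
  simpa using zpow_apply_mem_Dsig (σ := σ) hD0 1 hx

lemma mul_mem_mulSpan {X Y : Set B} {x y : B} (hx : x ∈ X) (hy : y ∈ Y) :
    x * y ∈ mulSpan X Y :=
  subset_closure (Submodule.subset_span ⟨x, hx, y, hy, rfl⟩)

lemma IsClosedIdealIn.mul_mem_right {C I : Set B} (hI : IsClosedIdealIn C I) {j c : B}
    (hj : j ∈ I) (hc : c ∈ C) : j * c ∈ I :=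
  (hI.2.2.2.2.2 c hc j hj).2

lemma IsClosedIdealIn.inter_of_subset {C I S : Set B} (hI : IsClosedIdealIn C I)
    (hS : IsCStarSubset S) (hSC : S ⊆ C) : IsClosedIdealIn S (I ∩ S) := by
  obtain ⟨-, hIcl, hI0, hIadd, hIsmul, hImul⟩ := hI
  obtain ⟨hScl, hS0, hSadd, hSsmul, hSmul, -⟩ := hS
  refine ⟨Set.inter_subset_right, hIcl.inter hScl, ⟨hI0, hS0⟩,
    fun x hx y hy => ⟨hIadd x hx.1 y hy.1, hSadd x hx.2 y hy.2⟩,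
    fun c x hx => ⟨hIsmul c x hx.1, hSsmul c x hx.2⟩, fun c hc j hj => ?_⟩
  obtain ⟨hcj, hjc⟩ := hImul c (hSC hc) j hj.1
  exact ⟨⟨hcj, hSmul c hc j hj.2⟩, ⟨hjc, hSmul j hj.2 c hc⟩⟩

/-- if `I` is a σ-invariant closed two-sided ideal of `D_σ`, then `I ∩ D` is a
semi-invariant closed two-sided ideal of `D`. -/
theorem stmt_13 (σ : B ≃⋆ₐ[ℂ] B) (D : Set B) (hHK : IsHKSystem σ D)
    (I : Set B) (hI : IsClosedIdealIn (Dsig σ D) I) (hinv : ⇑σ '' I = I) :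
    IsClosedIdealIn D (I ∩ D) ∧
    ∀ j ∈ I ∩ D, ∀ e ∈ D, j * σ e ∈ ⇑σ '' (I ∩ D) := by
  obtain ⟨hD, hspan, -, -⟩ := hHK
  have hD0 : (0 : B) ∈ D := hD.2.1
  refine ⟨hI.inter_of_subset hD fun x hx => mem_Dsig_of_mem hD0 hx, fun j hj e he => ?_⟩
  obtain ⟨x, hxD, hx⟩ : j * σ e ∈ ⇑σ '' D :=
    hspan ▸ mul_mem_mulSpan hj.2 (Set.mem_image_of_mem σ he)
  have hσxI : σ x ∈ ⇑σ '' I := hinv.symm ▸ hx ▸ hI.mul_mem_right hj.1 (apply_mem_Dsig hD0 he)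
  exact ⟨x, ⟨σ.injective.mem_set_image.1 hσxI, hxD⟩, hx⟩

end
end
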